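/- arXiv:2408.00627 — 2 statements merged into one kernel-verified Lean document; each statement's English description precedes it below -/
import Mathlib

section
/- Let A be an (ab)×(ab) Hermitian matrix blocked into an a×a array of b×b blocks A_{kl}. If all blocks A_{kl} (not just the diagonal ones) pairwise commute and each is normal, then there exists an orthonormal basis c_1,...,c_b of common eigenvectors of all blocks, and A = Σ_i B_i ⊗ (c_i c_i*), where B_i(k,l) is the eigenvalue of A_{kl} on c_i. -/
open Matrix Kronecker

set_option maxHeartbeats 1000000 in
/-- A commuting family of Hermitian matrices has a joint orthonormal eigenbasis. -/
theorem exists_joint_orthonormal_eigenbasis {n : ℕ} {ι : Type} (N : ι → Matrix (Fin n) (Fin n) ℂ)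
    (hH : ∀ x, (N x).IsHermitian) (hC : ∀ x y, N x * N y = N y * N x) :
    ∃ (c : Fin n → (Fin n → ℂ)) (μ : Fin n → ι → ℂ),
      (∀ i j, star (c i) ⬝ᵥ c j = if i = j then (1 : ℂ) else 0) ∧
      (∀ x i, (N x) *ᵥ c i = μ i x • c i) := by
  classical
  set T : ι → (EuclideanSpace ℂ (Fin n) →ₗ[ℂ] EuclideanSpace ℂ (Fin n)) :=
    fun x => Matrix.toEuclideanLin (N x) with hT
  have hTsym : ∀ x, (T x).IsSymmetric := fun x =>
    Matrix.isHermitian_iff_isSymmetric.mp (hH x)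
  have hTmul : ∀ X Y : Matrix (Fin n) (Fin n) ℂ,
      Matrix.toEuclideanLin (X * Y) = Matrix.toEuclideanLin X ∘ₗ Matrix.toEuclideanLin Y := by
    intro X Y
    ext v
    simp [Matrix.toEuclideanLin_apply, Matrix.mulVec_mulVec]
  have hTc : ∀ x y, Commute (T x) (T y) := by
    intro x y
    show T x * T y = T y * T x
    rw [Module.End.mul_eq_comp, Module.End.mul_eq_comp, hT]
    simp only
    rw [← hTmul, ← hTmul, hC]
  have hOrth := LinearMap.IsSymmetric.orthogonalFamily_iInf_eigenspaces (T := T) hTsym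
  have hIndep := hOrth.independent
  have hTop : (⨆ χ : ι → ℂ, ⨅ x, Module.End.eigenspace (T x) (χ x)) = ⊤ := by
    rcases isEmpty_or_nonempty ι with h | h
    · simp
    · exact LinearMap.IsSymmetric.iSup_iInf_eq_top_of_commute hTsym fun x y _ => hTc x y
  letI := hIndep.fintypeNeBotOfFiniteDimensional
  have hval : Function.Injective
      ((↑) : {χ : ι → ℂ // (⨅ x, Module.End.eigenspace (T x) (χ x)) ≠ ⊥} → (ι → ℂ)) :=
    Subtype.val_injective
  have hOrth' := hOrth.comp hval
  have hIndep' := hIndep.comp hval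
  have hTop' : (⨆ χ : {χ : ι → ℂ // (⨅ x, Module.End.eigenspace (T x) (χ x)) ≠ ⊥},
      ⨅ x, Module.End.eigenspace (T x) (χ.1 x)) = ⊤ := by
    rw [eq_top_iff, ← hTop]
    refine iSup_le fun χ => ?_
    by_cases h : (⨅ x, Module.End.eigenspace (T x) (χ x)) = ⊥
    · simp [h]
    · exact le_iSup_of_le ⟨χ, h⟩ le_rfl
  have hInternal := (DirectSum.isInternal_submodule_iff_iSupIndep_and_iSup_eq_top _).mpr
      ⟨hIndep', hTop'⟩
  have hn : Module.finrank ℂ (EuclideanSpace ℂ (Fin n)) = n := finrank_euclideanSpace_fin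
  set cb := hInternal.subordinateOrthonormalBasis hn hOrth' with hcb
  set χf := fun i => hInternal.subordinateOrthonormalBasisIndex hn i hOrth' with hχf
  have hmem : ∀ i, cb i ∈ (⨅ x, Module.End.eigenspace (T x) ((χf i).1 x)) :=
    fun i => hInternal.subordinateOrthonormalBasis_subordinate hn i hOrth'
  refine ⟨fun i => WithLp.equiv 2 (Fin n → ℂ) (cb i), fun i x => (χf i).1 x, ?_, ?_⟩
  · intro i j
    have := orthonormal_iff_ite.mp cb.orthonormal i j
    rw [← this, PiLp.inner_apply]
    simp [dotProduct, mul_comm]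
  · intro x i
    have hmem' : cb i ∈ Module.End.eigenspace (T x) ((χf i).1 x) :=
      (Submodule.mem_iInf _).mp (hmem i) x
    have heq : T x (cb i) = (χf i).1 x • cb i := Module.End.mem_eigenspace_iff.mp hmem'
    have := congrArg (WithLp.equiv 2 (Fin n → ℂ)) heq
    simpa [hT] using this

set_option maxHeartbeats 1000000 in
/-- If all blocks of a blocked Hermitian matrix pairwise commute and are
normal, there is a common orthonormal eigenbasis of all the blocks and the
matrix is a sum of Kronecker products against the rank-one projections. -/
theorem hermitian_block_T1half_decomposition
    {a b : ℕ} (A : Matrix (Fin a × Fin b) (Fin a × Fin b) ℂ)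
    (hA : A.IsHermitian)
    (hComm : ∀ k l k' l' : Fin a,
      (Matrix.of fun i j : Fin b => A (k, i) (l, j)) *
        (Matrix.of fun i j : Fin b => A (k', i) (l', j)) =
      (Matrix.of fun i j : Fin b => A (k', i) (l', j)) *
        (Matrix.of fun i j : Fin b => A (k, i) (l, j)))
    (hNormal : ∀ k l : Fin a,
      (Matrix.of fun i j : Fin b => A (k, i) (l, j)) *
        (Matrix.of fun i j : Fin b => A (k, i) (l, j))ᴴ =
      (Matrix.of fun i j : Fin b => A (k, i) (l, j))ᴴ *
        (Matrix.of fun i j : Fin b => A (k, i) (l, j))) :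
    ∃ (c : Fin b → (Fin b → ℂ)) (B : Fin b → Matrix (Fin a) (Fin a) ℂ),
      (∀ i j, star (c i) ⬝ᵥ c j = if i = j then (1 : ℂ) else 0) ∧
      (∀ k l : Fin a, ∀ i : Fin b,
        (Matrix.of fun i' j' : Fin b => A (k, i') (l, j')).mulVec (c i) =
          (B i k l) • c i) ∧
      A = ∑ i : Fin b, (B i) ⊗ₖ vecMulVec (c i) (star (c i)) := by
  classical
  set M : Fin a → Fin a → Matrix (Fin b) (Fin b) ℂ :=
    fun k l => Matrix.of fun i j => A (k, i) (l, j) with hM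
  have hadj : ∀ k l, (M k l)ᴴ = M l k := by
    intro k l
    ext i j
    simpa [hM, Matrix.conjTranspose_apply] using hA.apply (l, i) (k, j)
  have key : ∀ k l k' l', Commute (M k l) (M k' l') := fun k l k' l' => hComm k l k' l'
  -- real and imaginary parts of the blocks
  set N : (Fin a × Fin a × Bool) → Matrix (Fin b) (Fin b) ℂ := fun x =>
    if x.2.2 then (-Complex.I / 2) • (M x.1 x.2.1 - M x.2.1 x.1)
    else (2 : ℂ)⁻¹ • (M x.1 x.2.1 + M x.2.1 x.1) with hN
  have hNf : ∀ k l, N (k, l, false) = (2 : ℂ)⁻¹ • (M k l + M l k) := fun k l => by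
    simp [hN]
  have hNt : ∀ k l, N (k, l, true) = (-Complex.I / 2) • (M k l - M l k) := fun k l => by
    simp [hN]
  have hH : ∀ x, (N x).IsHermitian := by
    rintro ⟨k, l, (_ | _)⟩
    · rw [Matrix.IsHermitian, hNf, Matrix.conjTranspose_smul, Matrix.conjTranspose_add,
        hadj, hadj]
      have : star ((2 : ℂ)⁻¹) = (2 : ℂ)⁻¹ := by simp
      rw [this, add_comm]
    · rw [Matrix.IsHermitian, hNt, Matrix.conjTranspose_smul, Matrix.conjTranspose_sub,
        hadj, hadj]
      have : star (-Complex.I / 2) = Complex.I / 2 := by simp [Complex.star_def]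
      rw [this]
      module
  have hC : ∀ x y, N x * N y = N y * N x := by
    rintro ⟨k, l, (_ | _)⟩ ⟨k', l', (_ | _)⟩
    · rw [hNf, hNf]
      exact ((((key k l k' l').add_right (key k l l' k')).add_left
        ((key l k k' l').add_right (key l k l' k'))).smul_right _).smul_left _
    · rw [hNf, hNt]
      exact ((((key k l k' l').sub_right (key k l l' k')).add_left
        ((key l k k' l').sub_right (key l k l' k'))).smul_right _).smul_left _
    · rw [hNt, hNf]
      exact ((((key k l k' l').add_right (key k l l' k')).sub_left
        ((key l k k' l').add_right (key l k l' k'))).smul_right _).smul_left _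
    · rw [hNt, hNt]
      exact ((((key k l k' l').sub_right (key k l l' k')).sub_left
        ((key l k k' l').sub_right (key l k l' k'))).smul_right _).smul_left _
  obtain ⟨c, μ, hON, hEig⟩ := exists_joint_orthonormal_eigenbasis N hH hC
  set B : Fin b → Matrix (Fin a) (Fin a) ℂ :=
    fun i => Matrix.of fun k l => μ i (k, l, false) + Complex.I * μ i (k, l, true) with hB
  have hMsplit : ∀ k l, M k l = N (k, l, false) + Complex.I • N (k, l, true) := by
    intro k l
    rw [hNf, hNt, smul_smul]
    have hI : Complex.I * (-Complex.I / 2) = (2 : ℂ)⁻¹ := by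
      linear_combination (-(1 : ℂ) / 2) * Complex.I_sq
    rw [hI]
    module
  have heig : ∀ (k l : Fin a) (i : Fin b), M k l *ᵥ c i = B i k l • c i := by
    intro k l i
    rw [hMsplit, Matrix.add_mulVec, Matrix.smul_mulVec, hEig, hEig,
      smul_smul, ← add_smul]
    rfl
  -- completeness of the orthonormal basis
  have hcompl : ∀ t j', (∑ m, c m t * star (c m j')) = if t = j' then (1 : ℂ) else 0 := by
    set U : Matrix (Fin b) (Fin b) ℂ := Matrix.of fun m s => c m s with hU
    have h1 : U * Uᴴ = 1 := by
      ext i j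
      have h := hON j i
      simp only [dotProduct, Pi.star_apply] at h
      simp only [Matrix.mul_apply, Matrix.conjTranspose_apply, hU, Matrix.of_apply,
        Matrix.one_apply]
      calc ∑ s, c i s * star (c j s) = ∑ s, star (c j s) * c i s := by
            simp [mul_comm]
        _ = if j = i then 1 else 0 := h
        _ = if i = j then 1 else 0 := by simp [eq_comm]
    have h2 : Uᴴ * U = 1 := mul_eq_one_comm.mp h1
    intro t j'
    have h3 := congrFun (congrFun h2 j') t
    simp only [Matrix.mul_apply, Matrix.conjTranspose_apply, hU, Matrix.of_apply,
      Matrix.one_apply] at h3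
    calc ∑ m, c m t * star (c m j') = ∑ m, star (c m j') * c m t := by simp [mul_comm]
      _ = if j' = t then 1 else 0 := h3
      _ = if t = j' then 1 else 0 := by simp [eq_comm]
  refine ⟨c, B, hON, fun k l i => heig k l i, ?_⟩
  ext ⟨k, i'⟩ ⟨l, j'⟩
  rw [Matrix.sum_apply]
  simp only [kroneckerMap_apply, vecMulVec_apply, Pi.star_apply]
  have h4 : ∀ m, B m k l * c m i' = ∑ s, M k l i' s * c m s := by
    intro m
    have h := congrFun (heig k l m) i'
    simpa [Matrix.mulVec, dotProduct] using h.symm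
  calc A (k, i') (l, j')
      = ∑ s, M k l i' s * (if s = j' then (1 : ℂ) else 0) := by
        simp [hM]
    _ = ∑ s, M k l i' s * ∑ m, c m s * star (c m j') := by
        refine Finset.sum_congr rfl fun s _ => ?_
        rw [hcompl]
    _ = ∑ s, ∑ m, M k l i' s * (c m s * star (c m j')) := by
        simp [Finset.mul_sum]
    _ = ∑ m, ∑ s, M k l i' s * (c m s * star (c m j')) := Finset.sum_comm
    _ = ∑ m, (∑ s, M k l i' s * c m s) * star (c m j') := by
        refine Finset.sum_congr rfl fun m _ => ?_
        rw [Finset.sum_mul]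
        refine Finset.sum_congr rfl fun s _ => ?_
        ring
    _ = ∑ m, B m k l * c m i' * star (c m j') := by
        refine Finset.sum_congr rfl fun m _ => ?_
        rw [h4]
    _ = ∑ m, B m k l * (c m i' * star (c m j')) := by
        refine Finset.sum_congr rfl fun m _ => ?_
        ring
end

section
/- If A and B are m×n matrices satisfying AB* = BA* and A*B = B*A, then there exist a unitary m×m matrix U and a unitary n×n matrix V such that U*AV and U*BV are both (rectangular) diagonal matrices. -/
/-!
The Hermitian dilations `!![0, A; Aᴴ, 0]` and `!![0, B; Bᴴ, 0]` commute precisely because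
`A Bᴴ = B Aᴴ` and `Aᴴ B = Bᴴ A`, so for `A ≠ 0` they have a common eigenvector `(x, y)` whose
eigenvalue for the first one is nonzero. Then `x ≠ 0`, `y ≠ 0`, both `A` and `B` map `y` into the
line `ℂ x`, and both `Aᴴ` and `Bᴴ` map `x` into `ℂ y`. Unitaries whose first columns span these
lines bring `A` and `B` to the forms `!![a, 0; 0, A']` and `!![b, 0; 0, B']`, where `A'` and `B'`
again satisfy both relations, and we induct on the size.
-/

open Matrix

theorem Module.End.exists_hasEigenvector_of_commute {K V : Type*} [Field K] [IsAlgClosed K]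
    [AddCommGroup V] [Module K V] [FiniteDimensional K V] {f g : Module.End K V}
    (hfg : Commute f g) {t : K} (ht : f.HasEigenvalue t) :
    ∃ μ v, f.HasEigenvector t v ∧ g.HasEigenvector μ v := by
  have hg : Set.MapsTo g (f.eigenspace t) (f.eigenspace t) :=
    mapsTo_genEigenspace_of_comm hfg t 1
  have : Nontrivial (f.eigenspace t) := Submodule.nontrivial_iff_ne_bot.mpr ht
  obtain ⟨μ, hμ⟩ := exists_eigenvalue (g.restrict hg)
  obtain ⟨w, hw⟩ := hμ.exists_hasEigenvector
  refine ⟨μ, w, ⟨w.2, by simpa using hw.2⟩, ?_, by simpa using hw.2⟩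
  rw [mem_eigenspace_iff]
  exact congrArg Subtype.val hw.apply_eq_smul

namespace Matrix

section Block

variable {α : Type*} {m n k : ℕ}

def IsRectDiagonal [Zero α] (C : Matrix (Fin m) (Fin n) α) : Prop :=
  ∀ (i : Fin m) (j : Fin n), (i : ℕ) ≠ (j : ℕ) → C i j = 0

/-- The block matrix `!![c, 0; 0, D]`. -/
def cornerBlock [Zero α] (c : α) (D : Matrix (Fin m) (Fin n) α) :
    Matrix (Fin (m + 1)) (Fin (n + 1)) α :=
  of (vecCons (vecCons c 0) fun i => vecCons 0 (D i))

section Zero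

variable [Zero α] (c : α) (D : Matrix (Fin m) (Fin n) α)

@[simp] lemma cornerBlock_zero_zero : cornerBlock c D 0 0 = c := rfl
@[simp] lemma cornerBlock_zero_succ (j : Fin n) : cornerBlock c D 0 j.succ = 0 := rfl
@[simp] lemma cornerBlock_succ_zero (i : Fin m) : cornerBlock c D i.succ 0 = 0 := rfl
@[simp] lemma cornerBlock_succ_succ (i : Fin m) (j : Fin n) :
    cornerBlock c D i.succ j.succ = D i j := rfl

lemma eq_cornerBlock {C : Matrix (Fin (m + 1)) (Fin (n + 1)) α}
    (hcol : ∀ i, i ≠ 0 → C i 0 = 0) (hrow : ∀ j, j ≠ 0 → C 0 j = 0) :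
    C = cornerBlock (C 0 0) (C.submatrix Fin.succ Fin.succ) := by
  ext i j
  cases i using Fin.cases <;> cases j using Fin.cases <;>
    simp [hcol, hrow, Fin.succ_ne_zero]

lemma cornerBlock_inj {c' : α} {D' : Matrix (Fin m) (Fin n) α} :
    cornerBlock c D = cornerBlock c' D' ↔ c = c' ∧ D = D' := by
  refine ⟨fun h => ⟨congr_fun₂ h 0 0, ?_⟩, fun h => h.1 ▸ h.2 ▸ rfl⟩
  ext i j
  exact congr_fun₂ h i.succ j.succ

lemma isRectDiagonal_cornerBlock : IsRectDiagonal (cornerBlock c D) ↔ IsRectDiagonal D := by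
  refine ⟨fun h i j hij => h i.succ j.succ (by simpa using hij), fun h i j hij => ?_⟩
  cases i using Fin.cases <;> cases j using Fin.cases
  · exact absurd rfl hij
  · rfl
  · rfl
  · exact h _ _ (by simpa using hij)

end Zero

lemma conjTranspose_cornerBlock [AddMonoid α] [StarAddMonoid α] (c : α)
    (D : Matrix (Fin m) (Fin n) α) : (cornerBlock c D)ᴴ = cornerBlock (star c) Dᴴ := by
  ext i j
  cases i using Fin.cases <;> cases j using Fin.cases <;> simp

lemma cornerBlock_mul_cornerBlock [NonUnitalNonAssocSemiring α] (a b : α)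
    (D : Matrix (Fin m) (Fin n) α) (E : Matrix (Fin n) (Fin k) α) :
    cornerBlock a D * cornerBlock b E = cornerBlock (a * b) (D * E) := by
  ext i j
  cases i using Fin.cases <;> cases j using Fin.cases <;> simp [mul_apply, Fin.sum_univ_succ]

lemma cornerBlock_one [NonAssocSemiring α] :
    cornerBlock (1 : α) (1 : Matrix (Fin m) (Fin m) α) = 1 := by
  ext i j
  cases i using Fin.cases <;> cases j using Fin.cases <;>
    simp [one_apply, Fin.succ_ne_zero, (Fin.succ_ne_zero _).symm]

lemma cornerBlock_one_mem_unitaryGroup [CommRing α] [StarRing α]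
    {U : Matrix (Fin m) (Fin m) α} (hU : U ∈ unitaryGroup (Fin m) α) :
    cornerBlock 1 U ∈ unitaryGroup (Fin (m + 1)) α := by
  rw [mem_unitaryGroup_iff', star_eq_conjTranspose, conjTranspose_cornerBlock,
    cornerBlock_mul_cornerBlock, star_one, one_mul, ← star_eq_conjTranspose,
    (mem_unitaryGroup_iff').mp hU, cornerBlock_one]

end Block

variable {ι κ 𝕜 : Type*} [Fintype ι] [Fintype κ]

/-- Up to scaling, a pair of left and right singular vectors of `A`; nothing is normalised and
zero vectors are allowed. -/
def IsSingularPair [RCLike 𝕜] (A : Matrix ι κ 𝕜) (x : ι → 𝕜) (y : κ → 𝕜) : Prop :=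
  (∃ a : 𝕜, A *ᵥ y = a • x) ∧ ∃ c : 𝕜, Aᴴ *ᵥ x = c • y

section RCLike

variable [RCLike 𝕜]

lemma isSingularPair_zero (x : ι → 𝕜) (y : κ → 𝕜) :
    (0 : Matrix ι κ 𝕜).IsSingularPair x y :=
  ⟨⟨0, by simp⟩, 0, by simp⟩

lemma fromBlocks_mulVec_eq_smul_iff {A : Matrix ι κ 𝕜} {w : ι ⊕ κ → 𝕜} {t : 𝕜} :
    fromBlocks 0 A Aᴴ 0 *ᵥ w = t • w ↔
      A *ᵥ (w ∘ Sum.inr) = t • (w ∘ Sum.inl) ∧ Aᴴ *ᵥ (w ∘ Sum.inl) = t • (w ∘ Sum.inr) := by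
  rw [fromBlocks_mulVec, ← Sum.elim_comp_inl_inr (t • w), Sum.elim_eq_iff]
  simp only [zero_mulVec, zero_add, add_zero, Pi.smul_comp]

theorem exists_unitary_mulVec_single_eq_smul [DecidableEq ι] (i₀ : ι) {x : ι → 𝕜}
    (hx : x ≠ 0) : ∃ U ∈ unitaryGroup ι 𝕜, ∃ r : 𝕜, r ≠ 0 ∧ U *ᵥ Pi.single i₀ 1 = r • x := by
  have hx' : WithLp.toLp 2 x ≠ 0 := by simpa using hx
  set u : EuclideanSpace 𝕜 ι := (‖WithLp.toLp 2 x‖⁻¹ : 𝕜) • WithLp.toLp 2 x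
  obtain ⟨b, hb⟩ := Orthonormal.exists_orthonormalBasis_extension_of_card_eq (𝕜 := 𝕜)
    (v := fun _ => u) (s := {i₀}) (by simp)
    (orthonormal_subsingleton_iff.mpr fun _ => norm_smul_inv_norm hx')
  refine ⟨(EuclideanSpace.basisFun ι 𝕜).toBasis.toMatrix b,
    (EuclideanSpace.basisFun ι 𝕜).toMatrix_orthonormalBasis_mem_unitary b, _,
    inv_ne_zero (RCLike.ofReal_ne_zero.mpr (norm_ne_zero_iff.mpr hx')), ?_⟩
  ext i
  simp [Module.Basis.toMatrix_apply, hb i₀ rfl, u]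

lemma unitary_equiv_mul_conjTranspose [DecidableEq κ] {V : Matrix κ κ 𝕜}
    (hV : V ∈ unitaryGroup κ 𝕜) {ι' : Type*} (U : Matrix ι ι' 𝕜) (A B : Matrix ι κ 𝕜) :
    Uᴴ * A * V * (Uᴴ * B * V)ᴴ = Uᴴ * (A * Bᴴ) * U := by
  have hVV : V * Vᴴ = 1 := mem_unitaryGroup_iff.mp hV
  simp only [conjTranspose_mul, conjTranspose_conjTranspose, Matrix.mul_assoc]
  rw [← Matrix.mul_assoc V, hVV, Matrix.one_mul]

lemma unitary_equiv_conjTranspose_mul [DecidableEq ι] {U : Matrix ι ι 𝕜}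
    (hU : U ∈ unitaryGroup ι 𝕜) {κ' : Type*} (V : Matrix κ κ' 𝕜) (A B : Matrix ι κ 𝕜) :
    (Uᴴ * A * V)ᴴ * (Uᴴ * B * V) = Vᴴ * (Aᴴ * B) * V := by
  have hUU : U * Uᴴ = 1 := mem_unitaryGroup_iff.mp hU
  simp only [conjTranspose_mul, conjTranspose_conjTranspose, Matrix.mul_assoc]
  rw [← Matrix.mul_assoc U, hUU, Matrix.one_mul]

lemma conjTranspose_mul_mul_apply_eq_zero [DecidableEq ι] [DecidableEq κ] {U : Matrix ι ι 𝕜}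
    {V : Matrix κ κ 𝕜} {A : Matrix ι κ 𝕜} {x : ι → 𝕜} {y : κ → 𝕜} {i₀ : ι} {j₀ : κ} {r s a : 𝕜}
    (hU : U ∈ unitaryGroup ι 𝕜) (hr : r ≠ 0) (hUx : U *ᵥ Pi.single i₀ 1 = r • x)
    (hVy : V *ᵥ Pi.single j₀ 1 = s • y) (hA : A *ᵥ y = a • x) {i : ι} (hi : i ≠ i₀) :
    (Uᴴ * A * V) i j₀ = 0 := by
  have hUx' : Uᴴ *ᵥ x = r⁻¹ • Pi.single i₀ 1 := by
    rw [eq_inv_smul_iff₀ hr, ← mulVec_smul, ← hUx, mulVec_mulVec, ← star_eq_conjTranspose,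
      mem_unitaryGroup_iff'.mp hU, one_mulVec]
  have hcol : (Uᴴ * A * V) *ᵥ Pi.single j₀ 1 = (s * a * r⁻¹) • Pi.single i₀ 1 := by
    rw [← mulVec_mulVec, hVy, mulVec_smul, ← mulVec_mulVec, hA, mulVec_smul, hUx', smul_smul,
      smul_smul]
  simpa [hi] using congr_fun hcol i

end RCLike

theorem exists_isSingularPair_of_ne_zero {A B : Matrix ι κ ℂ} (h1 : A * Bᴴ = B * Aᴴ)
    (h2 : Aᴴ * B = Bᴴ * A) (hA : A ≠ 0) :
    ∃ x y, x ≠ 0 ∧ y ≠ 0 ∧ A.IsSingularPair x y ∧ B.IsSingularPair x y := by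
  set M := fromBlocks 0 A Aᴴ 0
  set N := fromBlocks 0 B Bᴴ 0
  have hM : M.IsHermitian := by simp [M, IsHermitian, fromBlocks_conjTranspose]
  have hM0 : M ≠ 0 := fun h => hA (by ext i j; simpa [M] using congr_fun₂ h (.inl i) (.inr j))
  have hMN : Commute M.mulVecLin N.mulVecLin := by
    rw [commute_iff_eq, Module.End.mul_eq_comp, Module.End.mul_eq_comp, ← mulVecLin_mul,
      ← mulVecLin_mul]
    simp [M, N, fromBlocks_multiply, h1, h2]
  obtain ⟨v, t, ht, hv, hMv⟩ := hM.exists_eigenvector_of_ne_zero hM0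
  have ht' : Module.End.HasEigenvalue M.mulVecLin t := by
    refine Module.End.hasEigenvalue_of_hasEigenvector (x := v) ⟨?_, hv⟩
    rw [Module.End.mem_eigenspace_iff, mulVecLin_apply, hMv]
    exact RCLike.real_smul_eq_coe_smul t v
  obtain ⟨μ, w, hMw, hNw⟩ := Module.End.exists_hasEigenvector_of_commute hMN ht'
  obtain ⟨hAy, hAx⟩ := fromBlocks_mulVec_eq_smul_iff.mp hMw.apply_eq_smul
  obtain ⟨hBy, hBx⟩ := fromBlocks_mulVec_eq_smul_iff.mp hNw.apply_eq_smul
  have ht0 : (t : ℂ) ≠ 0 := by exact_mod_cast ht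
  have hxy : w ∘ Sum.inl = 0 ↔ w ∘ Sum.inr = 0 := by
    constructor <;> intro h
    · rwa [h, mulVec_zero, eq_comm, smul_eq_zero, or_iff_right ht0] at hAx
    · rwa [h, mulVec_zero, eq_comm, smul_eq_zero, or_iff_right ht0] at hAy
  have hw : w ∘ Sum.inl ≠ 0 ∧ w ∘ Sum.inr ≠ 0 := by
    rw [ne_eq, ne_eq, hxy, and_self]
    intro hy
    apply hMw.2
    rw [← Sum.elim_comp_inl_inr w, hy, hxy.mpr hy, Sum.elim_zero_zero]
  exact ⟨_, _, hw.1, hw.2, ⟨⟨_, hAy⟩, _, hAx⟩, ⟨_, hBy⟩, _, hBx⟩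

theorem exists_isSingularPair [Nonempty ι] [Nonempty κ] {A B : Matrix ι κ ℂ}
    (h1 : A * Bᴴ = B * Aᴴ) (h2 : Aᴴ * B = Bᴴ * A) :
    ∃ x y, x ≠ 0 ∧ y ≠ 0 ∧ A.IsSingularPair x y ∧ B.IsSingularPair x y := by
  by_cases hA : A = 0
  · by_cases hB : B = 0
    · subst hA hB
      exact ⟨1, 1, one_ne_zero, one_ne_zero, isSingularPair_zero _ _, isSingularPair_zero _ _⟩
    · obtain ⟨x, y, hx, hy, hB', hA'⟩ := exists_isSingularPair_of_ne_zero h1.symm h2.symm hB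
      exact ⟨x, y, hx, hy, hA', hB'⟩
  · exact exists_isSingularPair_of_ne_zero h1 h2 hA

section Fin

variable [RCLike 𝕜] {m n : ℕ}

lemma exists_conjTranspose_mul_mul_eq_cornerBlock {U : Matrix (Fin (m + 1)) (Fin (m + 1)) 𝕜}
    {V : Matrix (Fin (n + 1)) (Fin (n + 1)) 𝕜} {A : Matrix (Fin (m + 1)) (Fin (n + 1)) 𝕜}
    {x : Fin (m + 1) → 𝕜} {y : Fin (n + 1) → 𝕜} {r s : 𝕜}
    (hU : U ∈ unitaryGroup _ 𝕜) (hV : V ∈ unitaryGroup _ 𝕜) (hr : r ≠ 0) (hs : s ≠ 0)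
    (hUx : U *ᵥ Pi.single 0 1 = r • x) (hVy : V *ᵥ Pi.single 0 1 = s • y)
    (hA : A.IsSingularPair x y) :
    ∃ a A', Uᴴ * A * V = cornerBlock a A' := by
  obtain ⟨⟨a, hAy⟩, c, hAx⟩ := hA
  refine ⟨_, _, eq_cornerBlock (fun i hi => ?_) (fun j hj => ?_)⟩
  · exact conjTranspose_mul_mul_apply_eq_zero hU hr hUx hVy hAy hi
  · have hrow := conjTranspose_mul_mul_apply_eq_zero hV hs hVy hUx hAx hj
    have hadj : (Uᴴ * A * V)ᴴ = Vᴴ * Aᴴ * U := by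
      simp only [conjTranspose_mul, conjTranspose_conjTranspose, Matrix.mul_assoc]
    rw [← conjTranspose_conjTranspose (Uᴴ * A * V), conjTranspose_apply, hadj, hrow, star_zero]

def HasSimultaneousSVD (A B : Matrix (Fin m) (Fin n) 𝕜) : Prop :=
  ∃ (U : unitaryGroup (Fin m) 𝕜) (V : unitaryGroup (Fin n) 𝕜),
    IsRectDiagonal ((U : Matrix (Fin m) (Fin m) 𝕜)ᴴ * A * (V : Matrix (Fin n) (Fin n) 𝕜)) ∧
      IsRectDiagonal ((U : Matrix (Fin m) (Fin m) 𝕜)ᴴ * B * (V : Matrix (Fin n) (Fin n) 𝕜))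

lemma HasSimultaneousSVD.of_cornerBlock {A B : Matrix (Fin (m + 1)) (Fin (n + 1)) 𝕜}
    {U : Matrix (Fin (m + 1)) (Fin (m + 1)) 𝕜} {V : Matrix (Fin (n + 1)) (Fin (n + 1)) 𝕜}
    {a b : 𝕜} {A' B' : Matrix (Fin m) (Fin n) 𝕜}
    (hU : U ∈ unitaryGroup _ 𝕜) (hV : V ∈ unitaryGroup _ 𝕜)
    (hA : Uᴴ * A * V = cornerBlock a A') (hB : Uᴴ * B * V = cornerBlock b B')
    (h : HasSimultaneousSVD A' B') : HasSimultaneousSVD A B := by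
  obtain ⟨⟨P, hP⟩, ⟨Q, hQ⟩, hA', hB'⟩ := h
  have hconj : ∀ (C : Matrix (Fin (m + 1)) (Fin (n + 1)) 𝕜) c C',
      Uᴴ * C * V = cornerBlock c C' →
      (U * cornerBlock 1 P)ᴴ * C * (V * cornerBlock 1 Q) = cornerBlock c (Pᴴ * C' * Q) := by
    intro C c C' hC
    calc _ = (cornerBlock 1 P)ᴴ * (Uᴴ * C * V) * cornerBlock 1 Q := by
          simp only [conjTranspose_mul, Matrix.mul_assoc]
      _ = _ := by
          rw [hC, conjTranspose_cornerBlock, cornerBlock_mul_cornerBlock,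
            cornerBlock_mul_cornerBlock, star_one, one_mul, mul_one]
  refine ⟨⟨_, mul_mem hU (cornerBlock_one_mem_unitaryGroup hP)⟩,
    ⟨_, mul_mem hV (cornerBlock_one_mem_unitaryGroup hQ)⟩, ?_, ?_⟩
  · exact (hconj A a A' hA).symm ▸ (isRectDiagonal_cornerBlock _ _).mpr hA'
  · exact (hconj B b B' hB).symm ▸ (isRectDiagonal_cornerBlock _ _).mpr hB'

end Fin

theorem hasSimultaneousSVD {m n : ℕ} (A B : Matrix (Fin m) (Fin n) ℂ)
    (h1 : A * Bᴴ = B * Aᴴ) (h2 : Aᴴ * B = Bᴴ * A) : HasSimultaneousSVD A B := by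
  induction m generalizing n with
  | zero => exact ⟨1, 1, fun i => i.elim0, fun i => i.elim0⟩
  | succ m ih =>
    cases n with
    | zero => exact ⟨1, 1, fun _ j => j.elim0, fun _ j => j.elim0⟩
    | succ n =>
      obtain ⟨x, y, hx, hy, hAxy, hBxy⟩ := exists_isSingularPair h1 h2
      obtain ⟨U, hU, r, hr, hUx⟩ := exists_unitary_mulVec_single_eq_smul 0 hx
      obtain ⟨V, hV, s, hs, hVy⟩ := exists_unitary_mulVec_single_eq_smul 0 hy
      obtain ⟨a, A', hA⟩ := exists_conjTranspose_mul_mul_eq_cornerBlock hU hV hr hs hUx hVy hAxy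
      obtain ⟨b, B', hB⟩ := exists_conjTranspose_mul_mul_eq_cornerBlock hU hV hr hs hUx hVy hBxy
      have h1' := unitary_equiv_mul_conjTranspose hV U A B
      have h2' := unitary_equiv_conjTranspose_mul hU V A B
      rw [h1, ← unitary_equiv_mul_conjTranspose hV U B A, hA, hB] at h1'
      rw [h2, ← unitary_equiv_conjTranspose_mul hU V B A, hA, hB] at h2'
      simp only [conjTranspose_cornerBlock, cornerBlock_mul_cornerBlock, cornerBlock_inj]
        at h1' h2'
      exact .of_cornerBlock hU hV hA hB (ih A' B' h1'.2 h2'.2)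

end Matrix

/-- Simultaneous singular value decomposition: if AB* = BA* and A*B = B*A,
then A and B are simultaneously unitarily equivalent to rectangular diagonal
matrices. -/
theorem simultaneous_svd
    {m n : ℕ} (A B : Matrix (Fin m) (Fin n) ℂ)
    (h1 : A * Bᴴ = B * Aᴴ) (h2 : Aᴴ * B = Bᴴ * A) :
    ∃ (U : Matrix.unitaryGroup (Fin m) ℂ) (V : Matrix.unitaryGroup (Fin n) ℂ),
      (∀ (i : Fin m) (j : Fin n), (i : ℕ) ≠ (j : ℕ) →
        ((U : Matrix (Fin m) (Fin m) ℂ)ᴴ * A * (V : Matrix (Fin n) (Fin n) ℂ)) i j = 0) ∧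
      (∀ (i : Fin m) (j : Fin n), (i : ℕ) ≠ (j : ℕ) →
        ((U : Matrix (Fin m) (Fin m) ℂ)ᴴ * B * (V : Matrix (Fin n) (Fin n) ℂ)) i j = 0) :=
  hasSimultaneousSVD A B h1 h2
end
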